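/- Let k be a field, G a finite group, and β a normalized 3-cocycle on G with values in kˣ. For x ∈ G define the k-linear map φ(x) on the subalgebra D^β(k[G])^comm by φ(x)(⟨h,y⟩) = (θ_{xhx⁻¹}(x,y) / θ_{xhx⁻¹}(xyx⁻¹,x)) · ⟨xhx⁻¹, xyx⁻¹⟩ for h,y ∈ G with hy = yh. Then each φ(x) is a unital k-algebra automorphism of D^β(k[G])^comm, the assignment x ↦ φ(x) is a group homomorphism from G to the automorphism group of D^β(k[G])^comm, and φ(x) maps the span of {⟨h,y⟩ : hy = yh} with second index y isomorphically to the span with second index xyx⁻¹. -/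

import Mathlib

open scoped BigOperators TensorProduct

namespace StringyOrbifold

/-- A normalized 3-cocycle on `G` with values in `kˣ`. -/
def IsNormalized3Cocycle {k G : Type*} [Field k] [Group G] (β : G → G → G → kˣ) : Prop :=
  (∀ g h l m : G, β g h l * β g (h * l) m * β h l m = β (g * h) l m * β g h (l * m)) ∧
  (∀ g h : G, β 1 g h = 1 ∧ β g 1 h = 1 ∧ β g h 1 = 1)

/-- A normalized 2-cocycle on `G` with values in `kˣ`. -/
def IsNormalized2Cocycle {k G : Type*} [Field k] [Group G] (α : G → G → kˣ) : Prop :=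
  (∀ g h l : G, α g h * α (g * h) l = α h l * α g (h * l)) ∧
  (∀ g : G, α g 1 = 1 ∧ α 1 g = 1)

/-- `θ_g(x,y) = β(g,x,y)·β(x,y,(xy)⁻¹g(xy)) / β(x,x⁻¹gx,y)`. -/
def ddTheta {k G : Type*} [Field k] [Group G] (β : G → G → G → kˣ) (g x y : G) : kˣ :=
  β g x y * β x y ((x * y)⁻¹ * g * (x * y)) / β x (x⁻¹ * g * x) y

/-- `γ_x(g₁,g₂) = β(g₁,g₂,x)·β(x,x⁻¹g₁x,x⁻¹g₂x) / β(g₁,x,x⁻¹g₂x)`. -/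
def ddGamma {k G : Type*} [Field k] [Group G] (β : G → G → G → kˣ) (x g1 g2 : G) : kˣ :=
  β g1 g2 x * β x (x⁻¹ * g1 * x) (x⁻¹ * g2 * x) / β g1 x (x⁻¹ * g2 * x)

/-- The trivial 3-cocycle. -/
def trivCocycle (k G : Type*) [Field k] [Group G] : G → G → G → kˣ := fun _ _ _ => 1

/-- The underlying `k`-vector space of the twisted Drinfel'd double `D^β(k[G])`:
the free `k`-module on the basis `⟨g,x⟩`, `(g,x) ∈ G × G`, realized as functions. -/
abbrev DD (k G : Type*) := G × G → k

/-- The function model for `D^β(k[G]) ⊗ D^β(k[G])`. -/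
abbrev DD2 (k G : Type*) := (G × G) × (G × G) → k

/-- The function model for the threefold tensor power of `D^β(k[G])`. -/
abbrev DD3 (k G : Type*) := (G × G) × (G × G) × (G × G) → k

/-- The basis element `⟨g,x⟩` of `D^β(k[G])`. -/
def ddBasis {k G : Type*} [Field k] [DecidableEq G] (g x : G) : DD k G :=
  fun p => if p = (g, x) then 1 else 0

/-- The multiplication of `D^β(k[G])`, the bilinear extension of
`⟨g,x⟩·⟨h,y⟩ = δ_{g,xhx⁻¹} θ_g(x,y) ⟨g,xy⟩`. -/
def ddMul {k G : Type*} [Field k] [Group G] [Fintype G]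
    (β : G → G → G → kˣ) (a b : DD k G) : DD k G :=
  fun p => ∑ x : G, a (p.1, x) * b (x⁻¹ * p.1 * x, x⁻¹ * p.2) * (ddTheta β p.1 x (x⁻¹ * p.2) : k)

/-- The identity `Σ_{h∈G} ⟨h,e⟩` of `D^β(k[G])`. -/
def ddOne (k G : Type*) [Field k] [Group G] [Fintype G] [DecidableEq G] : DD k G :=
  ∑ g : G, ddBasis g 1

/-- The elementary tensor `a ⊗ b` in the function model of `D^β(k[G]) ⊗ D^β(k[G])`. -/
def ddTensor {k G : Type*} [Field k] (a b : DD k G) : DD2 k G :=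
  fun p => a p.1 * b p.2

/-- The elementary tensor `a ⊗ b ⊗ c` in the function model of the triple tensor power. -/
def ddTensor3 {k G : Type*} [Field k] (a b c : DD k G) : DD3 k G :=
  fun p => a p.1 * b p.2.1 * c p.2.2

/-- Componentwise multiplication on `D^β(k[G]) ⊗ D^{β'}(k[G])` in the function model. -/
def dd2Mul {k G : Type*} [Field k] [Group G] [Fintype G]
    (β β' : G → G → G → kˣ) (a b : DD2 k G) : DD2 k G :=
  fun p => ∑ x : G, ∑ y : G,
    a ((p.1.1, x), (p.2.1, y)) *
      b ((x⁻¹ * p.1.1 * x, x⁻¹ * p.1.2), (y⁻¹ * p.2.1 * y, y⁻¹ * p.2.2)) *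
      (ddTheta β p.1.1 x (x⁻¹ * p.1.2) : k) * (ddTheta β' p.2.1 y (y⁻¹ * p.2.2) : k)

/-- Componentwise multiplication on the threefold tensor power of `D^β(k[G])`. -/
def dd3Mul {k G : Type*} [Field k] [Group G] [Fintype G]
    (β : G → G → G → kˣ) (a b : DD3 k G) : DD3 k G :=
  fun p => ∑ x : G, ∑ y : G, ∑ z : G,
    a ((p.1.1, x), (p.2.1.1, y), (p.2.2.1, z)) *
      b ((x⁻¹ * p.1.1 * x, x⁻¹ * p.1.2), (y⁻¹ * p.2.1.1 * y, y⁻¹ * p.2.1.2),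
        (z⁻¹ * p.2.2.1 * z, z⁻¹ * p.2.2.2)) *
      (ddTheta β p.1.1 x (x⁻¹ * p.1.2) : k) * (ddTheta β p.2.1.1 y (y⁻¹ * p.2.1.2) : k) *
      (ddTheta β p.2.2.1 z (z⁻¹ * p.2.2.2) : k)

/-- The comultiplication of `D^β(k[G])`: the linear extension of
`Δ(⟨g,x⟩) = Σ_{g₁g₂=g} γ_x(g₁,g₂) ⟨g₁,x⟩ ⊗ ⟨g₂,x⟩`. -/
def ddComul {k G : Type*} [Field k] [Group G] [DecidableEq G]
    (β : G → G → G → kˣ) (a : DD k G) : DD2 k G :=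
  fun p =>
    if p.1.2 = p.2.2 then (ddGamma β p.1.2 p.1.1 p.2.1 : k) * a (p.1.1 * p.2.1, p.1.2) else 0

/-- The map `id ⊗ Δ` from `D^β(k[G])^{⊗2}` to `D^β(k[G])^{⊗3}` in the function model. -/
def idTensorComul {k G : Type*} [Field k] [Group G] [DecidableEq G]
    (β : G → G → G → kˣ) (u : DD2 k G) : DD3 k G :=
  fun p => if p.2.1.2 = p.2.2.2 then
      (ddGamma β p.2.1.2 p.2.1.1 p.2.2.1 : k) * u (p.1, (p.2.1.1 * p.2.2.1, p.2.1.2))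
    else 0

/-- The map `Δ ⊗ id` from `D^β(k[G])^{⊗2}` to `D^β(k[G])^{⊗3}` in the function model. -/
def comulTensorId {k G : Type*} [Field k] [Group G] [DecidableEq G]
    (β : G → G → G → kˣ) (u : DD2 k G) : DD3 k G :=
  fun p => if p.1.2 = p.2.1.2 then
      (ddGamma β p.1.2 p.1.1 p.2.1.1 : k) * u ((p.1.1 * p.2.1.1, p.1.2), p.2.2)
    else 0

/-- The flip of the two tensor factors. -/
def ddSwap {k G : Type*} (u : DD2 k G) : DD2 k G := fun p => u (p.2, p.1)

/-- The counit `ε(⟨g,x⟩) = δ_{g,e}` of `D^β(k[G])`. -/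
def ddCounit {k G : Type*} [Field k] [Group G] [Fintype G] (a : DD k G) : k :=
  ∑ x : G, a (1, x)

/-- The injection `k[G]^* → D^β(k[G])`, `δ_g ↦ ⟨g,e⟩`. -/
def ddIota {k G : Type*} [Field k] [Group G] [DecidableEq G] (f : G → k) : DD k G :=
  fun p => if p.2 = 1 then f p.1 else 0

/-- The diagonal map `D^{ββ'}(k[G]) → D^β(k[G]) ⊗ D^{β'}(k[G])`, `⟨g,x⟩ ↦ ⟨g,x⟩ ⊗ ⟨g,x⟩`. -/
def ddDiag {k G : Type*} [Field k] [DecidableEq G] (a : DD k G) : DD2 k G :=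
  fun p => if p.1 = p.2 then a p.1 else 0

/-- The antipode of `D^β(k[G])`: the linear extension of
`S(⟨g,x⟩) = (θ_{g⁻¹}(x,x⁻¹)·γ_x(g,g⁻¹))⁻¹ ⟨x⁻¹g⁻¹x, x⁻¹⟩`. -/
def ddAntipode {k G : Type*} [Field k] [Group G] (β : G → G → G → kˣ) (a : DD k G) : DD k G :=
  fun p =>
    (((ddTheta β (p.2⁻¹ * p.1 * p.2) p.2⁻¹ p.2 *
        ddGamma β p.2⁻¹ (p.2⁻¹ * p.1⁻¹ * p.2) (p.2⁻¹ * p.1 * p.2))⁻¹ : kˣ) : k) *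
      a (p.2⁻¹ * p.1⁻¹ * p.2, p.2⁻¹)

/-- The antipode of the untwisted double `D(k[G])`: `S(⟨g,x⟩) = ⟨x⁻¹g⁻¹x, x⁻¹⟩`. -/
def ddAntipode0 {k G : Type*} [Field k] [Group G] (a : DD k G) : DD k G :=
  fun p => a (p.2⁻¹ * p.1⁻¹ * p.2, p.2⁻¹)

/-- The operator `φ(x)` on `D^β(k[G])^{comm}`: the linear extension of
`φ(x)(⟨h,y⟩) = (θ_{xhx⁻¹}(x,y)/θ_{xhx⁻¹}(xyx⁻¹,x))·⟨xhx⁻¹, xyx⁻¹⟩`. -/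
def ddPhi {k G : Type*} [Field k] [Group G] (β : G → G → G → kˣ) (x : G) (a : DD k G) :
    DD k G :=
  fun p => ((ddTheta β p.1 x (x⁻¹ * p.2 * x) / ddTheta β p.1 p.2 x : kˣ) : k) *
    a (x⁻¹ * p.1 * x, x⁻¹ * p.2 * x)

/-- The span of the basis elements `⟨g,x⟩` with `gx = xg`, i.e. `D^β(k[G])^{comm}`. -/
def ddCommSpan (k G : Type*) [Field k] [Group G] [DecidableEq G] : Submodule k (DD k G) :=
  Submodule.span k {v : DD k G | ∃ g x : G, g * x = x * g ∧ v = ddBasis g x}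

/-- The underlying space of the twisted group ring `k^α[G]`. -/
abbrev TG (k G : Type*) := G → k

/-- The basis element `1_g` of `k^α[G]`. -/
def tgBasis {k G : Type*} [Field k] [DecidableEq G] (g : G) : TG k G :=
  fun z => if z = g then 1 else 0

/-- The multiplication `1_g·1_h = α(g,h) 1_{gh}` of the twisted group ring `k^α[G]`. -/
def tgMul {k G : Type*} [Field k] [Group G] [Fintype G] (α : G → G → kˣ) (a b : TG k G) :
    TG k G :=
  fun z => ∑ x : G, a x * b (x⁻¹ * z) * (α x (x⁻¹ * z) : k)

/-- The identity `1_e` of `k^α[G]`. -/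
def tgOne (k G : Type*) [Field k] [Group G] [DecidableEq G] : TG k G := tgBasis 1

/-- The inverse `α(g,g⁻¹)⁻¹·1_{g⁻¹}` of the basis element `1_g` in `k^α[G]`. -/
def tgInvBasis {k G : Type*} [Field k] [Group G] [DecidableEq G] (α : G → G → kˣ) (g : G) :
    TG k G :=
  (((α g g⁻¹)⁻¹ : kˣ) : k) • tgBasis g⁻¹

/-- Conjugation `ρ(g)(a) = 1_g · a · (1_g)⁻¹` in the twisted group ring `k^α[G]`. -/
def tgConj {k G : Type*} [Field k] [Group G] [Fintype G] [DecidableEq G]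
    (α : G → G → kˣ) (g : G) (a : TG k G) : TG k G :=
  tgMul α (tgBasis g) (tgMul α a (tgInvBasis α g))

theorem comm_inv_left {G : Type*} [Group G] {g x : G} (h : x * g = g * x) :
    x⁻¹ * g = g * x⁻¹ := by
  rw [eq_mul_inv_iff_mul_eq, mul_assoc, ← h, ← mul_assoc, inv_mul_cancel, one_mul]

theorem comm_inv_mul {G : Type*} [Group G] {g x z : G} (hx : x * g = g * x)
    (hz : z * g = g * z) : (x⁻¹ * z) * g = g * (x⁻¹ * z) := by
  rw [mul_assoc, hz, ← mul_assoc, comm_inv_left hx, mul_assoc]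

/-- The index set `{(g,x) : x ∈ Z(g)}` of the direct sum `⊕_g k^{θ_g}[Z(g)]`. -/
abbrev CentPairs (G : Type*) [Group G] := Σ g : G, {x : G // x * g = g * x}

/-- The underlying space of `⊕_g k^{θ_g}[Z(g)]`. -/
abbrev TY (k G : Type*) [Group G] := CentPairs G → k

/-- The multiplication of `⊕_g k^{θ_g}[Z(g)]`: in the `g`-th summand,
`1_x·1_y = θ_g(x,y)·1_{xy}` for `x, y ∈ Z(g)`, and distinct summands multiply to `0`. -/
def tyMul {k G : Type*} [Field k] [Group G] [Fintype G] [DecidableEq G]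
    (β : G → G → G → kˣ) (a b : TY k G) : TY k G :=
  fun q => ∑ x : {x : G // x * q.1 = q.1 * x},
    a ⟨q.1, x⟩ * b ⟨q.1, ⟨(x : G)⁻¹ * (q.2 : G), comm_inv_mul x.2 q.2.2⟩⟩ *
      (ddTheta β q.1 (x : G) ((x : G)⁻¹ * (q.2 : G)) : k)

/-- The identity of `⊕_g k^{θ_g}[Z(g)]`. -/
def tyOne (k G : Type*) [Field k] [Group G] [DecidableEq G] : TY k G :=
  fun q => if (q.2 : G) = 1 then 1 else 0

/-- The map `⊕_g k^{θ_g}[Z(g)] → D^β(k[G])` sending `1_x` in the `g`-th summand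
to `⟨g,x⟩`. -/
def tyMap {k G : Type*} [Field k] [Group G] [DecidableEq G] (f : TY k G) : DD k G :=
  fun p => if h : p.2 * p.1 = p.1 * p.2 then f ⟨p.1, ⟨p.2, h⟩⟩ else 0

/-- The action of `D^{ββ'}(k[G])` on `A ⊗ B`, assigning to `⟨g,x⟩` the endomorphism
`ρ_A(⟨g,x⟩) ⊗ ρ_B(⟨g,x⟩)` and extending linearly. -/
noncomputable def ddTensorAction {k G A B : Type*} [Field k] [Group G] [Fintype G]
    [DecidableEq G] [AddCommGroup A] [Module k A] [AddCommGroup B] [Module k B]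
    (ρA : DD k G → (A →ₗ[k] A)) (ρB : DD k G → (B →ₗ[k] B)) (a : DD k G) :
    (A ⊗[k] B) →ₗ[k] (A ⊗[k] B) :=
  ∑ p : G × G, a p • TensorProduct.map (ρA (ddBasis p.1 p.2)) (ρB (ddBasis p.1 p.2))

section Aux
variable {k G : Type*} [Field k] [Group G] (β : G → G → G → kˣ)

theorem theta_one_right (hβ : IsNormalized3Cocycle β) (g x : G) : ddTheta β g x 1 = 1 := by
  simp [ddTheta, (hβ.2 _ _).2.1, (hβ.2 _ _).2.2]

theorem theta_one_left (hβ : IsNormalized3Cocycle β) (g y : G) : ddTheta β g 1 y = 1 := by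
  simp [ddTheta, (hβ.2 _ _).1, (hβ.2 _ _).2.1]

theorem theta_cocycle (hβ : IsNormalized3Cocycle β) (g a b c : G) :
    ddTheta β g a b * ddTheta β g (a * b) c =
      ddTheta β (a⁻¹ * g * a) b c * ddTheta β g a (b * c) := by
  have r1 : a * (a⁻¹ * g * a) = g * a := by group
  have r2 : b * ((a * b)⁻¹ * g * (a * b)) = (a⁻¹ * g * a) * b := by group
  have r3 : ((a * b)⁻¹ * g * (a * b)) * c = c * ((a * b * c)⁻¹ * g * (a * b * c)) := by group
  have r4 : (a * (b * c))⁻¹ * g * (a * (b * c)) = (a * b * c)⁻¹ * g * (a * b * c) := by group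
  have r5 : (b * c)⁻¹ * (a⁻¹ * g * a) * (b * c) = (a * b * c)⁻¹ * g * (a * b * c) := by group
  have r6 : b⁻¹ * (a⁻¹ * g * a) * b = (a * b)⁻¹ * g * (a * b) := by group
  have e1 := hβ.1 g a b c
  have e2 := hβ.1 a (a⁻¹ * g * a) b c
  have e3 := hβ.1 a b ((a * b)⁻¹ * g * (a * b)) c
  have e4 := hβ.1 a b c ((a * b * c)⁻¹ * g * (a * b * c))
  rw [r1] at e2
  rw [r2, r3] at e3
  simp only [ddTheta, r4, r5, r6]
  rw [div_mul_div_comm, div_mul_div_comm, div_eq_div_iff_mul_eq_mul]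
  refine Units.ext ?_
  push_cast
  have E1 := congrArg Units.val e1
  have E2 := congrArg Units.val e2
  have E3 := congrArg Units.val e3
  have E4 := congrArg Units.val e4
  push_cast at E1 E2 E3 E4
  apply mul_right_cancel₀ (b := ((β (g*a) b c : k) * (β a ((a⁻¹*g*a)*b) c : k) *
    (β a b (c * ((a*b*c)⁻¹*g*(a*b*c))) : k) * (β a b c : k)))
  · exact mul_ne_zero (mul_ne_zero (mul_ne_zero (Units.ne_zero _) (Units.ne_zero _)) (Units.ne_zero _)) (Units.ne_zero _)
  · linear_combination
      ((β a b ((a*b)⁻¹*g*(a*b)) : k) * (β a ((a⁻¹*g*a)*b) c : k) * (β b ((a*b)⁻¹*g*(a*b)) c : k)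
        * ((β (g*a) b c : k) * (β a (a⁻¹*g*a) (b*c) : k))
        * ((β (a*b) c ((a*b*c)⁻¹*g*(a*b*c)) : k) * (β a b (c*((a*b*c)⁻¹*g*(a*b*c))) : k))) * E1
      + (((β (g*a) b c : k) * (β g a (b*c) : k)) * ((β (g*a) b c : k) * (β a (a⁻¹*g*a) (b*c) : k))
        * ((β (a*b) c ((a*b*c)⁻¹*g*(a*b*c)) : k) * (β a b (c*((a*b*c)⁻¹*g*(a*b*c))) : k))) * E3
      - (((β (g*a) b c : k) * (β g a (b*c) : k))
        * ((β (a*b) ((a*b)⁻¹*g*(a*b)) c : k) * (β a b (c*((a*b*c)⁻¹*g*(a*b*c))) : k))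
        * ((β (a*b) c ((a*b*c)⁻¹*g*(a*b*c)) : k) * (β a b (c*((a*b*c)⁻¹*g*(a*b*c))) : k))) * E2
      - (((β (g*a) b c : k) * (β g a (b*c) : k))
        * ((β (a*b) ((a*b)⁻¹*g*(a*b)) c : k) * (β a b (c*((a*b*c)⁻¹*g*(a*b*c))) : k))
        * ((β a (a⁻¹*g*a) b : k) * (β a ((a⁻¹*g*a)*b) c : k) * (β (a⁻¹*g*a) b c : k))) * E4

theorem phiAux {A B C D E F G' H I : kˣ} (h1 : A * B = C * D) (h2 : E * B = F * G')
    (h3 : F * H = I * D) : H * E * C = G' * A * I := by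
  refine Units.ext ?_
  have h1' := congrArg Units.val h1
  have h2' := congrArg Units.val h2
  have h3' := congrArg Units.val h3
  push_cast at h1' h2' h3' ⊢
  apply mul_right_cancel₀ (b := ((B : k) * D * F))
  · exact mul_ne_zero (mul_ne_zero (Units.ne_zero _) (Units.ne_zero _)) (Units.ne_zero _)
  · linear_combination ((E : k) * B * C * D) * h3' + ((I : k) * D * C * D) * h2'
      - ((I : k) * D * F * G') * h1'

variable [Fintype G] [DecidableEq G]

theorem ddOne_apply (p : G × G) : ddOne k G p = if p.2 = 1 then (1 : k) else 0 := by
  classical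
  simp only [ddOne, ddBasis, Finset.sum_apply, Prod.ext_iff]
  by_cases h : p.2 = 1 <;> simp [h]

theorem ddMul_one (hβ : IsNormalized3Cocycle β) (a : DD k G) :
    ddMul β a (ddOne k G) = a := by
  funext p
  simp only [ddMul, ddOne_apply, inv_mul_eq_one]
  rw [Finset.sum_eq_single p.2]
  · simp [theta_one_right β hβ]
  · intro z _ hz; simp [hz]
  · simp

theorem one_ddMul (hβ : IsNormalized3Cocycle β) (a : DD k G) :
    ddMul β (ddOne k G) a = a := by
  funext p
  simp only [ddMul, ddOne_apply]
  rw [Finset.sum_eq_single 1]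
  · simp [theta_one_left β hβ]
  · intro z _ hz; simp [hz]
  · simp

theorem ddMul_assoc (hβ : IsNormalized3Cocycle β) (a b c : DD k G) :
    ddMul β (ddMul β a b) c = ddMul β a (ddMul β b c) := by
  funext p
  simp only [ddMul]
  simp only [Finset.sum_mul, Finset.mul_sum]
  rw [Finset.sum_comm]
  refine Finset.sum_congr rfl fun w _ => ?_
  refine (Fintype.sum_equiv (Equiv.mulLeft w) _ _ fun u => ?_).symm
  simp only [Equiv.coe_mulLeft, inv_mul_cancel_left]
  have g1 : (w * u)⁻¹ * p.1 * (w * u) = u⁻¹ * (w⁻¹ * p.1 * w) * u := by group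
  have g2 : (w * u)⁻¹ * p.2 = u⁻¹ * (w⁻¹ * p.2) := by group
  have TT := congrArg Units.val (theta_cocycle β hβ p.1 w u ((w * u)⁻¹ * p.2))
  have g3 : u * ((w * u)⁻¹ * p.2) = w⁻¹ * p.2 := by group
  rw [g3, g2] at TT
  push_cast at TT
  rw [g1, g2]
  linear_combination -(a (p.1, w) * b (w⁻¹ * p.1 * w, u) *
    c (u⁻¹ * (w⁻¹ * p.1 * w) * u, u⁻¹ * (w⁻¹ * p.2))) * TT

/-- The invertible element `u_x = Σ_g ⟨g,x⟩`. -/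
def ddU (x : G) : DD k G := fun p => if p.2 = x then (1 : k) else 0

/-- The inverse of `u_x`. -/
def ddV (x : G) : DD k G :=
  fun p => if p.2 = x⁻¹ then (((ddTheta β (x * p.1 * x⁻¹) x x⁻¹)⁻¹ : kˣ) : k) else 0

theorem ddU_mul (a : DD k G) (x : G) :
    ddMul β (ddU x) a = ddMul β (ddPhi β x a) (ddU x) := by
  funext p
  simp only [ddMul, ddU, ddPhi]
  rw [Finset.sum_eq_single x, Finset.sum_eq_single (p.2 * x⁻¹)]
  · have g1 : x⁻¹ * (p.2 * x⁻¹) * x = x⁻¹ * p.2 := by group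
    have g2 : (p.2 * x⁻¹)⁻¹ * p.2 = x := by group
    rw [g1, g2, if_pos rfl, Units.val_div_eq_div_val]
    field_simp
  · intro z _ hz
    have : z⁻¹ * p.2 ≠ x := fun h => hz (by rw [← h]; group)
    simp [this]
  · simp
  · intro z _ hz; simp [hz]
  · simp

theorem ddU_ddV (x : G) : ddMul β (ddU x) (ddV β x) = ddOne k G := by
  funext p
  simp only [ddMul, ddU, ddV, ddOne_apply]
  rw [Finset.sum_eq_single x]
  · have g1 : x * (x⁻¹ * p.1 * x) * x⁻¹ = p.1 := by group
    by_cases hp : p.2 = 1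
    · rw [hp]
      simp only [mul_one, if_pos rfl, g1, one_mul]
      simp [← Units.val_mul]
    · have h2 : x⁻¹ * p.2 ≠ x⁻¹ := fun h => hp (by
        have h' : x⁻¹ * p.2 = x⁻¹ * 1 := by rw [mul_one]; exact h
        exact mul_left_cancel h')
      simp [h2, hp]
  · intro z _ hz; simp [hz]
  · simp

theorem ddPhi_mul (hβ : IsNormalized3Cocycle β) (x : G) (a b : DD k G) :
    ddPhi β x (ddMul β a b) = ddMul β (ddPhi β x a) (ddPhi β x b) := by
  have h1 : ddMul β (ddPhi β x (ddMul β a b)) (ddU x) =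
      ddMul β (ddMul β (ddPhi β x a) (ddPhi β x b)) (ddU x) := by
    rw [← ddU_mul, ← ddMul_assoc β hβ, ddU_mul, ddMul_assoc β hβ, ddU_mul, ← ddMul_assoc β hβ]
  calc ddPhi β x (ddMul β a b)
      = ddMul β (ddPhi β x (ddMul β a b)) (ddOne k G) := (ddMul_one β hβ _).symm
    _ = ddMul β (ddPhi β x (ddMul β a b)) (ddMul β (ddU x) (ddV β x)) := by rw [ddU_ddV]
    _ = ddMul β (ddMul β (ddPhi β x (ddMul β a b)) (ddU x)) (ddV β x) :=
        (ddMul_assoc β hβ _ _ _).symm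
    _ = ddMul β (ddMul β (ddMul β (ddPhi β x a) (ddPhi β x b)) (ddU x)) (ddV β x) := by rw [h1]
    _ = ddMul β (ddMul β (ddPhi β x a) (ddPhi β x b)) (ddMul β (ddU x) (ddV β x)) :=
        ddMul_assoc β hβ _ _ _
    _ = ddMul β (ddMul β (ddPhi β x a) (ddPhi β x b)) (ddOne k G) := by rw [ddU_ddV]
    _ = ddMul β (ddPhi β x a) (ddPhi β x b) := ddMul_one β hβ _

theorem ddPhi_add (x : G) (a b : DD k G) :
    ddPhi β x (a + b) = ddPhi β x a + ddPhi β x b := by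
  funext p; simp [ddPhi, mul_add]

theorem ddPhi_smul (x : G) (c : k) (a : DD k G) :
    ddPhi β x (c • a) = c • ddPhi β x a := by
  funext p; simp [ddPhi, smul_eq_mul]; ring

theorem ddPhi_one_eq (hβ : IsNormalized3Cocycle β) (x : G) :
    ddPhi β x (ddOne k G) = ddOne k G := by
  funext p
  simp only [ddPhi, ddOne_apply]
  by_cases hp : p.2 = 1
  · rw [hp]
    have g1 : x⁻¹ * 1 * x = (1 : G) := by group
    rw [g1]
    simp [theta_one_right β hβ, theta_one_left β hβ]
  · have h1 : ¬(x⁻¹ * p.2 * x = 1) := fun h => hp (by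
      have : p.2 = x * 1 * x⁻¹ := by rw [← h]; group
      simpa using this)
    rw [if_neg h1, if_neg hp, mul_zero]

theorem ddPhi_id (hβ : IsNormalized3Cocycle β) (a : DD k G) : ddPhi β 1 a = a := by
  funext p
  have g1 : (1 : G)⁻¹ * p.1 * 1 = p.1 := by group
  have g2 : (1 : G)⁻¹ * p.2 * 1 = p.2 := by group
  simp only [ddPhi, g1, g2, theta_one_right β hβ, theta_one_left β hβ]
  simp

theorem ddPhi_basis (x h y : G) :
    ddPhi β x (ddBasis h y) =
      ((ddTheta β (x * h * x⁻¹) x y / ddTheta β (x * h * x⁻¹) (x * y * x⁻¹) x : kˣ) : k) •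
        ddBasis (x * h * x⁻¹) (x * y * x⁻¹) := by
  funext p
  simp only [ddPhi, ddBasis, Pi.smul_apply, smul_eq_mul]
  by_cases hp : p = (x * h * x⁻¹, x * y * x⁻¹)
  · rw [hp]
    have g1 : x⁻¹ * (x * h * x⁻¹) * x = h := by group
    have g2 : x⁻¹ * (x * y * x⁻¹) * x = y := by group
    simp [g1, g2]
  · have h1 : ¬((x⁻¹ * p.1 * x, x⁻¹ * p.2 * x) = (h, y)) := by
      intro hc
      apply hp
      have h1 := congrArg Prod.fst hc
      have h2 := congrArg Prod.snd hc
      simp only at h1 h2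
      have : p = (p.1, p.2) := rfl
      rw [this, ← h1, ← h2, Prod.mk.injEq]
      refine ⟨by group, by group⟩
    rw [if_neg h1, if_neg hp, mul_zero, mul_zero]

theorem mem_ddCommSpan_iff (a : DD k G) :
    a ∈ ddCommSpan k G ↔ ∀ p : G × G, a p ≠ 0 → p.1 * p.2 = p.2 * p.1 := by
  constructor
  · intro ha
    induction ha using Submodule.span_induction with
    | mem v hv =>
      obtain ⟨g, x, hgx, rfl⟩ := hv
      intro p hp
      by_cases h : p = (g, x)
      · rw [h]; exact hgx
      · simp [ddBasis, h] at hp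
    | zero => intro p hp; simp at hp
    | add u v _ _ hu hv =>
      intro p hp
      by_cases h : u p ≠ 0
      · exact hu p h
      · exact hv p (by push_neg at h; simpa [h] using hp)
    | smul c u _ hu =>
      intro p hp
      refine hu p fun h => hp ?_
      simp [h]
  · intro h
    have ha : a = ∑ p ∈ Finset.univ.filter (fun p : G × G => p.1 * p.2 = p.2 * p.1),
        a p • ddBasis p.1 p.2 := by
      funext q
      rw [Finset.sum_apply]
      simp only [Pi.smul_apply, ddBasis, smul_eq_mul, mul_ite, mul_one, mul_zero, Prod.mk.eta]
      rw [Finset.sum_ite_eq _ q (fun p => a p)]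
      by_cases hq : q.1 * q.2 = q.2 * q.1
      · simp [hq]
      · simp only [Finset.mem_filter, Finset.mem_univ, true_and, hq, if_false]
        by_contra hne
        exact hq (h q fun h0 => hne h0)
    rw [ha]
    refine Submodule.sum_mem _ fun p hp => Submodule.smul_mem _ _ (Submodule.subset_span ?_)
    exact ⟨p.1, p.2, (Finset.mem_filter.mp hp).2, rfl⟩

theorem ddPhi_comp (hβ : IsNormalized3Cocycle β) (x x' : G) (a : DD k G)
    (ha : a ∈ ddCommSpan k G) :
    ddPhi β (x * x') a = ddPhi β x (ddPhi β x' a) := by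
  funext p
  simp only [ddPhi]
  have gA : x'⁻¹ * (x⁻¹ * p.1 * x) * x' = (x * x')⁻¹ * p.1 * (x * x') := by group
  have gB : x'⁻¹ * (x⁻¹ * p.2 * x) * x' = (x * x')⁻¹ * p.2 * (x * x') := by group
  rw [gA, gB]
  by_cases hz : a ((x * x')⁻¹ * p.1 * (x * x'), (x * x')⁻¹ * p.2 * (x * x')) = 0
  · rw [hz]; ring
  · have hcomm0 := (mem_ddCommSpan_iff a).mp ha _ hz
    simp only at hcomm0
    have hcomm : p.2⁻¹ * p.1 * p.2 = p.1 := by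
      have e1 : (x * x') * (((x * x')⁻¹ * p.1 * (x * x')) * ((x * x')⁻¹ * p.2 * (x * x'))) *
          (x * x')⁻¹ = p.1 * p.2 := by group
      have e2 : (x * x') * (((x * x')⁻¹ * p.2 * (x * x')) * ((x * x')⁻¹ * p.1 * (x * x'))) *
          (x * x')⁻¹ = p.2 * p.1 := by group
      have e3 : p.1 * p.2 = p.2 * p.1 := by rw [← e1, ← e2, hcomm0]
      rw [mul_assoc, e3, ← mul_assoc, inv_mul_cancel, one_mul]
    have i1 := theta_cocycle β hβ p.1 x (x⁻¹ * p.2 * x) x'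
    have i2 := theta_cocycle β hβ p.1 p.2 x x'
    have i3 := theta_cocycle β hβ p.1 x x' ((x * x')⁻¹ * p.2 * (x * x'))
    have g3 : x * (x⁻¹ * p.2 * x) = p.2 * x := by group
    have g5 : x' * ((x * x')⁻¹ * p.2 * (x * x')) = x⁻¹ * p.2 * x * x' := by group
    rw [g3] at i1
    rw [hcomm] at i2
    rw [g5] at i3
    have key := phiAux (k := k) i1 i2 i3
    have keyk := congrArg Units.val key
    push_cast at keyk
    have hcoU : ddTheta β p.1 (x * x') ((x * x')⁻¹ * p.2 * (x * x')) / ddTheta β p.1 p.2 (x * x') =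
        ddTheta β p.1 x (x⁻¹ * p.2 * x) / ddTheta β p.1 p.2 x *
          (ddTheta β (x⁻¹ * p.1 * x) x' ((x * x')⁻¹ * p.2 * (x * x')) /
            ddTheta β (x⁻¹ * p.1 * x) (x⁻¹ * p.2 * x) x') := by
      rw [div_mul_div_comm, div_eq_div_iff_mul_eq_mul]
      exact Units.ext (by push_cast; linear_combination keyk)
    have hco := congrArg Units.val hcoU
    push_cast at hco
    push_cast
    rw [hco]; ring

theorem ddPhi_zero (x : G) : ddPhi β x (0 : DD k G) = 0 := by
  funext p; simp [ddPhi]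

theorem conj_comm_of_comm {u g w : G} (h : (u⁻¹ * g * u) * (u⁻¹ * w * u) = (u⁻¹ * w * u) * (u⁻¹ * g * u)) :
    g * w = w * g := by
  have e1 : u * ((u⁻¹ * g * u) * (u⁻¹ * w * u)) * u⁻¹ = g * w := by group
  have e2 : u * ((u⁻¹ * w * u) * (u⁻¹ * g * u)) * u⁻¹ = w * g := by group
  rw [← e1, ← e2, h]

theorem ddPhi_mem_comm (x : G) (a : DD k G) (ha : a ∈ ddCommSpan k G) :
    ddPhi β x a ∈ ddCommSpan k G := by
  rw [mem_ddCommSpan_iff] at ha ⊢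
  intro p hp
  simp only [ddPhi] at hp
  have h0 : a (x⁻¹ * p.1 * x, x⁻¹ * p.2 * x) ≠ 0 := by
    intro h; exact hp (by rw [h, mul_zero])
  have h2 := ha _ h0
  simp only at h2
  exact conj_comm_of_comm (u := x) h2

theorem ddPhi_mem_ySpan (x y : G) (a : DD k G)
    (ha : a ∈ Submodule.span k {v : DD k G | ∃ h : G, h * y = y * h ∧ v = ddBasis h y}) :
    ddPhi β x a ∈ Submodule.span k {v : DD k G |
        ∃ h : G, h * (x * y * x⁻¹) = (x * y * x⁻¹) * h ∧ v = ddBasis h (x * y * x⁻¹)} := by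
  induction ha using Submodule.span_induction with
  | mem v hv =>
    obtain ⟨h, hc, rfl⟩ := hv
    rw [ddPhi_basis]
    refine Submodule.smul_mem _ _ (Submodule.subset_span ⟨x * h * x⁻¹, ?_, rfl⟩)
    have e1 : (x * h * x⁻¹) * (x * y * x⁻¹) = x * (h * y) * x⁻¹ := by group
    have e2 : (x * y * x⁻¹) * (x * h * x⁻¹) = x * (y * h) * x⁻¹ := by group
    rw [e1, e2, hc]
  | zero => rw [ddPhi_zero]; exact Submodule.zero_mem _
  | add u v _ _ hu hv => rw [ddPhi_add]; exact Submodule.add_mem _ hu hv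
  | smul c u _ hu => rw [ddPhi_smul]; exact Submodule.smul_mem _ _ hu

theorem ySpan_le_commSpan (y : G) :
    Submodule.span k {v : DD k G | ∃ h : G, h * y = y * h ∧ v = ddBasis h y} ≤ ddCommSpan k G :=
  Submodule.span_mono fun v hv => by
    obtain ⟨h, hc, hv⟩ := hv
    exact ⟨h, y, hc, hv⟩

end Aux
/-- `φ(x)` is a unital algebra automorphism of `D^β(k[G])^{comm}`,
`x ↦ φ(x)` is a group homomorphism, and `φ(x)` maps the span with second index `y`
isomorphically to the span with second index `xyx⁻¹`. -/
theorem stmt16 {k G : Type*} [Field k] [Group G] [Fintype G] [DecidableEq G]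
    (β : G → G → G → kˣ) (hβ : IsNormalized3Cocycle β) (x : G) :
    (∀ h y : G, h * y = y * h → ddPhi β x (ddBasis h y) =
      ((ddTheta β (x * h * x⁻¹) x y / ddTheta β (x * h * x⁻¹) (x * y * x⁻¹) x : kˣ) : k) •
        ddBasis (x * h * x⁻¹) (x * y * x⁻¹)) ∧
    (∀ a b : DD k G, ddPhi β x (a + b) = ddPhi β x a + ddPhi β x b) ∧
    (∀ (c : k) (a : DD k G), ddPhi β x (c • a) = c • ddPhi β x a) ∧
    (∀ a ∈ ddCommSpan k G, ddPhi β x a ∈ ddCommSpan k G) ∧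
    ddPhi β x (ddOne k G) = ddOne k G ∧
    (∀ a ∈ ddCommSpan k G, ∀ b ∈ ddCommSpan k G,
      ddPhi β x (ddMul β a b) = ddMul β (ddPhi β x a) (ddPhi β x b)) ∧
    (∀ a ∈ ddCommSpan k G, ddPhi β 1 a = a) ∧
    (∀ x' : G, ∀ a ∈ ddCommSpan k G, ddPhi β (x * x') a = ddPhi β x (ddPhi β x' a)) ∧
    Set.BijOn (ddPhi β x) (ddCommSpan k G : Set (DD k G)) (ddCommSpan k G : Set (DD k G)) ∧
    (∀ y : G, Set.BijOn (ddPhi β x)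
      (Submodule.span k {v : DD k G | ∃ h : G, h * y = y * h ∧ v = ddBasis h y} :
        Set (DD k G))
      (Submodule.span k {v : DD k G |
          ∃ h : G, h * (x * y * x⁻¹) = (x * y * x⁻¹) * h ∧ v = ddBasis h (x * y * x⁻¹)} :
        Set (DD k G))) := by
  obtain ⟨hβ1, hβ2⟩ := id hβ
  have hInj : Set.InjOn (ddPhi β x) (ddCommSpan k G : Set (DD k G)) := by
    intro a ha b hb h
    have ea : a = ddPhi β x⁻¹ (ddPhi β x a) := by
      rw [← ddPhi_comp β hβ x⁻¹ x a ha, inv_mul_cancel, ddPhi_id β hβ]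
    have eb : b = ddPhi β x⁻¹ (ddPhi β x b) := by
      rw [← ddPhi_comp β hβ x⁻¹ x b hb, inv_mul_cancel, ddPhi_id β hβ]
    rw [ea, eb, h]
  refine ⟨fun h y _ => ddPhi_basis β x h y, ddPhi_add β x, ddPhi_smul β x,
    fun a ha => ddPhi_mem_comm β x a ha, ddPhi_one_eq β hβ x,
    fun a _ b _ => ddPhi_mul β hβ x a b, fun a ha => ddPhi_id β hβ a,
    fun x' a ha => ddPhi_comp β hβ x x' a ha, ⟨fun a ha => ddPhi_mem_comm β x a ha, hInj, ?_⟩,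
    fun y => ⟨fun a ha => ddPhi_mem_ySpan β x y a ha,
      hInj.mono (ySpan_le_commSpan (k := k) y), ?_⟩⟩
  · intro b hb
    refine ⟨ddPhi β x⁻¹ b, ddPhi_mem_comm β x⁻¹ b hb, ?_⟩
    rw [← ddPhi_comp β hβ x x⁻¹ b hb, mul_inv_cancel, ddPhi_id β hβ]
  · intro b hb
    have hb' : b ∈ Submodule.span k {v : DD k G |
        ∃ h : G, h * (x * y * x⁻¹) = (x * y * x⁻¹) * h ∧ v = ddBasis h (x * y * x⁻¹)} := hb
    have hmem := ddPhi_mem_ySpan β x⁻¹ (x * y * x⁻¹) b hb'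
    have hy : x⁻¹ * (x * y * x⁻¹) * x⁻¹⁻¹ = y := by group
    rw [hy] at hmem
    refine ⟨ddPhi β x⁻¹ b, hmem, ?_⟩
    have hbc : b ∈ ddCommSpan k G := ySpan_le_commSpan (k := k) (x * y * x⁻¹) hb'
    rw [← ddPhi_comp β hβ x x⁻¹ b hbc, mul_inv_cancel, ddPhi_id β hβ]

end StringyOrbifold
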